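/- Let m be a positive integer and define Φ_m(r) = ((−r^m − log(1−r^m))/(2r^m))·(−(1/r^m)log(1−r^m) + (1/r^m)log(1+r^m) + 2/(1+r^m)) + 2·(r²/(1−r) + r + 2 + (2/r)log(1−r)) − (1/r^m)·log(1+r^m) for r ∈ (0,1). Then Φ_m is monotonically increasing on (0,1), lim_{r→0⁺} Φ_m(r) = −1 and lim_{r→1⁻} Φ_m(r) = +∞; hence the equation Φ_m(r) = 0 has exactly one root R_{m,1} ∈ (0,1). Moreover Φ_m(r) > 0 for all r > R_m, where R_m ∈ (0,1) is the positive root of 2(−r^m − log(1−r^m)) = r^m(1−r^{2m}); consequently R_{m,1} ≤ R_m. -/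

import Mathlib

open Set Filter

/-- The function `Φ_m(r)` from the proof of Theorem 2.2. -/
noncomputable def PhiFun (m : ℕ) (r : ℝ) : ℝ :=
  ((-r ^ m - Real.log (1 - r ^ m)) / (2 * r ^ m)) *
    (-(1/r ^ m) * Real.log (1 - r ^ m) + (1/r ^ m) * Real.log (1 + r ^ m)
      + 2 / (1 + r ^ m))
  + 2 * (r ^ 2 / (1 - r) + r + 2 + (2 / r) * Real.log (1 - r))
  - (1/r ^ m) * Real.log (1 + r ^ m)

/-- generic helper: f 0 = 0 and f' ≥ 0 on (0,1) gives f ≥ 0 on [0,1) -/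
lemma aux_nonneg {f f' : ℝ → ℝ} (hc : ContinuousOn f (Ico 0 1))
    (hd : ∀ x ∈ Ioo (0:ℝ) 1, HasDerivAt f (f' x) x)
    (h0 : ∀ x ∈ Ioo (0:ℝ) 1, 0 ≤ f' x) (hf0 : f 0 = 0) :
    ∀ x ∈ Ico (0:ℝ) 1, 0 ≤ f x := by
  have hmono : MonotoneOn f (Ico 0 1) := by
    apply monotoneOn_of_deriv_nonneg (convex_Ico 0 1) hc
    · intro x hx
      rw [interior_Ico] at hx
      exact (hd x hx).differentiableAt.differentiableWithinAt
    · intro x hx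
      rw [interior_Ico] at hx
      rw [(hd x hx).deriv]
      exact h0 x hx
  intro x hx
  rw [← hf0]
  exact hmono ⟨le_refl 0, zero_lt_one⟩ hx hx.1

lemma hd_log1m {x : ℝ} (hx : x ∈ Ioo (0:ℝ) 1) :
    HasDerivAt (fun y : ℝ => Real.log (1 - y)) (-(1-x)⁻¹) x := by
  have h : HasDerivAt (fun y : ℝ => 1 - y) (-1) x := by
    simpa using (hasDerivAt_id x).const_sub 1
  have := (Real.hasDerivAt_log (by nlinarith [hx.2] : (1:ℝ) - x ≠ 0)).comp x h
  simpa [Function.comp_def] using this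

lemma hd_log1p {x : ℝ} (hx : x ∈ Ioo (0:ℝ) 1) :
    HasDerivAt (fun y : ℝ => Real.log (1 + y)) ((1+x)⁻¹) x := by
  have h : HasDerivAt (fun y : ℝ => 1 + y) 1 x := by
    simpa using (hasDerivAt_id x).const_add 1
  have := (Real.hasDerivAt_log (by nlinarith [hx.1] : (1:ℝ) + x ≠ 0)).comp x h
  simpa [Function.comp_def] using this

lemma cont_log1m : ContinuousOn (fun y : ℝ => Real.log (1 - y)) (Ico 0 1) := by
  apply ContinuousOn.log (by fun_prop)
  intro x hx; nlinarith [hx.2]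

lemma cont_log1p : ContinuousOn (fun y : ℝ => Real.log (1 + y)) (Ico 0 1) := by
  apply ContinuousOn.log (by fun_prop)
  intro x hx; nlinarith [hx.1]

/-- L1 -/
lemma logL1 {x : ℝ} (hx : x ∈ Ico (0:ℝ) 1) :
    Real.log (1-x) ≤ -x - x^2/2 - x^3/3 := by
  have := aux_nonneg (f := fun y => -y - y^2/2 - y^3/3 - Real.log (1-y))
    (f' := fun y => y^3/(1-y))
    (by apply ContinuousOn.sub (by fun_prop) cont_log1m)
    (fun y hy => by
      have h1 : (1:ℝ) - y > 0 := by nlinarith [hy.2]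
      have := ((hasDerivAt_id y).neg.sub ((hasDerivAt_pow 2 y).div_const 2)).sub
        ((hasDerivAt_pow 3 y).div_const 3) |>.sub (hd_log1m hy)
      refine this.congr_deriv ?_
      field_simp
      ring)
    (fun y hy => div_nonneg (pow_nonneg hy.1.le _) (by nlinarith [hy.2]))
    (by norm_num) x hx
  linarith

/-- L2 -/
lemma logL2 {x : ℝ} (hx : x ∈ Ico (0:ℝ) 1) :
    -(x + x^2/2 + x^3/3 + x^4/(4*(1-x))) ≤ Real.log (1-x) := by
  have := aux_nonneg
    (f := fun y => Real.log (1-y) + (y + y^2/2 + y^3/3 + y^4/(4*(1-y))))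
    (f' := fun y => y^4/(4*(1-y)^2))
    (by
      apply ContinuousOn.add cont_log1m
      apply ContinuousOn.add (by fun_prop)
      apply ContinuousOn.div (by fun_prop) (by fun_prop)
      intro y hy; nlinarith [hy.2])
    (fun y hy => by
      have h1 : (1:ℝ) - y > 0 := by nlinarith [hy.2]
      have hden : (4:ℝ)*(1-y) ≠ 0 := by positivity
      have hnum : HasDerivAt (fun z : ℝ => z^4) (4*y^3) y := by
        simpa using hasDerivAt_pow 4 y
      have hdd : HasDerivAt (fun z : ℝ => 4*(1-z)) (-4) y := by
        simpa using ((hasDerivAt_id y).const_sub 1).const_mul (4:ℝ)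
      have hd4 := hnum.div hdd hden
      have := (hd_log1m hy).add (((hasDerivAt_id y).add
        ((hasDerivAt_pow 2 y).div_const 2)).add ((hasDerivAt_pow 3 y).div_const 3) |>.add hd4)
      refine this.congr_deriv ?_
      field_simp
      ring)
    (fun y hy => by
      have h1 : (1:ℝ) - y > 0 := by nlinarith [hy.2]
      positivity)
    (by norm_num) x hx
  linarith

/-- L5 -/
lemma logL5 {x : ℝ} (hx : x ∈ Ico (0:ℝ) 1) :
    -(x + x^2/(2*(1-x))) ≤ Real.log (1-x) := by
  have := aux_nonneg
    (f := fun y => Real.log (1-y) + (y + y^2/(2*(1-y))))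
    (f' := fun y => y^2/(2*(1-y)^2))
    (by
      apply ContinuousOn.add cont_log1m
      apply ContinuousOn.add (by fun_prop)
      apply ContinuousOn.div (by fun_prop) (by fun_prop)
      intro y hy; nlinarith [hy.2])
    (fun y hy => by
      have h1 : (1:ℝ) - y > 0 := by nlinarith [hy.2]
      have hden : (2:ℝ)*(1-y) ≠ 0 := by positivity
      have hnum : HasDerivAt (fun z : ℝ => z^2) (2*y) y := by
        simpa using hasDerivAt_pow 2 y
      have hdd : HasDerivAt (fun z : ℝ => 2*(1-z)) (-2) y := by
        simpa using ((hasDerivAt_id y).const_sub 1).const_mul (2:ℝ)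
      have hd4 := hnum.div hdd hden
      have := (hd_log1m hy).add ((hasDerivAt_id y).add hd4)
      refine this.congr_deriv ?_
      field_simp
      ring)
    (fun y hy => by
      have h1 : (1:ℝ) - y > 0 := by nlinarith [hy.2]
      positivity)
    (by norm_num) x hx
  linarith

/-- L3 -/
lemma logL3 {x : ℝ} (hx : x ∈ Ico (0:ℝ) 1) :
    Real.log (1+x) ≤ x - x^2/2 + x^3/3 := by
  have := aux_nonneg (f := fun y => y - y^2/2 + y^3/3 - Real.log (1+y))
    (f' := fun y => y^3/(1+y))
    (ContinuousOn.sub (by fun_prop) cont_log1p)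
    (fun y hy => by
      have h1 : (1:ℝ) + y > 0 := by nlinarith [hy.1]
      have := (((hasDerivAt_id y).sub ((hasDerivAt_pow 2 y).div_const 2)).add
        ((hasDerivAt_pow 3 y).div_const 3)).sub (hd_log1p hy)
      refine this.congr_deriv ?_
      field_simp
      ring)
    (fun y hy => div_nonneg (pow_nonneg hy.1.le _) (by nlinarith [hy.1]))
    (by norm_num) x hx
  linarith

/-- L4 -/
lemma logL4 {x : ℝ} (hx : x ∈ Ico (0:ℝ) 1) :
    x - x^2/2 + x^3/3 - x^4/4 ≤ Real.log (1+x) := by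
  have := aux_nonneg
    (f := fun y => Real.log (1+y) - (y - y^2/2 + y^3/3 - y^4/4))
    (f' := fun y => y^4/(1+y))
    (ContinuousOn.sub cont_log1p (by fun_prop))
    (fun y hy => by
      have h1 : (1:ℝ) + y > 0 := by nlinarith [hy.1]
      have := (hd_log1p hy).sub ((((hasDerivAt_id y).sub
        ((hasDerivAt_pow 2 y).div_const 2)).add ((hasDerivAt_pow 3 y).div_const 3)).sub
        ((hasDerivAt_pow 4 y).div_const 4))
      refine this.congr_deriv ?_
      field_simp
      ring)
    (fun y hy => div_nonneg (pow_nonneg hy.1.le _) (by nlinarith [hy.1]))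
    (by norm_num) x hx
  linarith

/-- simple: log(1-x) ≤ -x -/
lemma logL0 {x : ℝ} (hx : x ∈ Ico (0:ℝ) 1) : Real.log (1-x) ≤ -x := by
  have := Real.log_le_sub_one_of_pos (by nlinarith [hx.2] : (0:ℝ) < 1 - x)
  linarith

lemma logL0p {x : ℝ} (hx : (0:ℝ) ≤ x) : Real.log (1+x) ≤ x := by
  have := Real.log_le_sub_one_of_pos (by nlinarith : (0:ℝ) < 1 + x)
  linarith

/-- polynomial form of L2 -/
lemma logL2p {x : ℝ} (hx : x ∈ Ioo (0:ℝ) 1) :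
    -((1-x)*Real.log (1-x)) ≤ (x + x^2/2 + x^3/3)*(1-x) + x^4/4 := by
  have h1 : (0:ℝ) < 1 - x := by nlinarith [hx.2]
  have h := logL2 (x := x) ⟨hx.1.le, hx.2⟩
  have h2 := mul_le_mul_of_nonneg_left (neg_le.mpr h) h1.le
  have h3 : (1-x) * (x + x^2/2 + x^3/3 + x^4/(4*(1-x)))
      = (x + x^2/2 + x^3/3)*(1-x) + x^4/4 := by
    field_simp
  nlinarith [h2]

noncomputable def FaF (x : ℝ) : ℝ := (-x - Real.log (1-x))/(2*x)
noncomputable def FlF (x : ℝ) : ℝ := (Real.log (1+x) - Real.log (1-x))/x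
noncomputable def G2F (x : ℝ) : ℝ :=
  (-x - Real.log (1-x))/(2*x) * (2/(1+x)) - Real.log (1+x)/x
noncomputable def gF (r : ℝ) : ℝ := r^2/(1-r) + r + 2 + (2/r)*Real.log (1-r)

lemma hd_Fa {x : ℝ} (hx : x ∈ Ioo (0:ℝ) 1) :
    HasDerivAt FaF ((x^2/(1-x) + x + Real.log (1-x))/(2*x^2)) x := by
  have h0 : x ≠ 0 := ne_of_gt hx.1
  have h1 : (0:ℝ) < 1 - x := by nlinarith [hx.2]
  have hnum : HasDerivAt (fun y : ℝ => -y - Real.log (1-y)) (-1 - (-(1-x)⁻¹)) x :=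
    (hasDerivAt_id x).neg.sub (hd_log1m hx)
  have hden : HasDerivAt (fun y : ℝ => 2*y) 2 x := by
    simpa using (hasDerivAt_id x).const_mul (2:ℝ)
  have := hnum.div hden (by simpa using h0)
  refine this.congr_deriv ?_
  field_simp
  ring

lemma hd_Fl {x : ℝ} (hx : x ∈ Ioo (0:ℝ) 1) :
    HasDerivAt FlF
      ((2*x/((1+x)*(1-x)) - (Real.log (1+x) - Real.log (1-x)))/x^2) x := by
  have h0 : x ≠ 0 := ne_of_gt hx.1
  have h1 : (0:ℝ) < 1 - x := by nlinarith [hx.2]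
  have h2 : (0:ℝ) < 1 + x := by nlinarith [hx.1]
  have hnum : HasDerivAt (fun y : ℝ => Real.log (1+y) - Real.log (1-y))
      ((1+x)⁻¹ - (-(1-x)⁻¹)) x := (hd_log1p hx).sub (hd_log1m hx)
  have := hnum.div (hasDerivAt_id x) h0
  refine this.congr_deriv ?_
  simp only [id]
  field_simp
  try ring
  try exact Or.inl trivial

lemma hd_G2 {x : ℝ} (hx : x ∈ Ioo (0:ℝ) 1) :
    HasDerivAt G2F
      ((2*x^2/(1-x) + (1+x)^2*Real.log (1+x) + (1+2*x)*Real.log (1-x))/(x*(1+x))^2) x := by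
  have h0 : x ≠ 0 := ne_of_gt hx.1
  have h1 : (0:ℝ) < 1 - x := by nlinarith [hx.2]
  have h2 : (0:ℝ) < 1 + x := by nlinarith [hx.1]
  have t1 := hd_Fa hx
  have t2 : HasDerivAt (fun y : ℝ => 2/(1+y)) ((0*(1+x) - 2*1)/(1+x)^2) x :=
    (hasDerivAt_const x 2).div ((hasDerivAt_id x).const_add 1) (ne_of_gt h2)
  have t3 : HasDerivAt (fun y : ℝ => Real.log (1+y)/y) (((1+x)⁻¹*x - Real.log (1+x)*1)/x^2) x :=
    (hd_log1p hx).div (hasDerivAt_id x) h0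
  have := (t1.mul t2).sub t3
  refine this.congr_deriv ?_
  unfold FaF
  field_simp
  ring

lemma hd_g {r : ℝ} (hr : r ∈ Ioo (0:ℝ) 1) :
    HasDerivAt gF
      ((2*r*(1-r) - r^2*(-1))/(1-r)^2 + 1
        + (((0*r - 2*1)/r^2)*Real.log (1-r) + (2/r)*(-(1-r)⁻¹))) r := by
  have h0 : r ≠ 0 := ne_of_gt hr.1
  have h1 : (0:ℝ) < 1 - r := by nlinarith [hr.2]
  have q1 : HasDerivAt (fun y : ℝ => y^2/(1-y)) ((2*r*(1-r) - r^2*(-1))/(1-r)^2) r := by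
    have := (by simpa using hasDerivAt_pow 2 r : HasDerivAt (fun y : ℝ => y^2) (2*r) r)
    exact this.div ((hasDerivAt_id r).const_sub 1) (ne_of_gt h1)
  have q2 : HasDerivAt (fun y : ℝ => (2/y)*Real.log (1-y))
      (((0*r - 2*1)/r^2)*Real.log (1-r) + (2/r)*(-(1-r)⁻¹)) r := by
    exact ((hasDerivAt_const r 2).div (hasDerivAt_id r) h0).mul (hd_log1m hr)
  have := ((q1.add (hasDerivAt_id r)).add_const 2).add q2
  refine this.congr_deriv ?_
  rfl

lemma Fa_pos {x : ℝ} (hx : x ∈ Ioo (0:ℝ) 1) : 0 < FaF x := by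
  have h := logL1 (x := x) ⟨hx.1.le, hx.2⟩
  unfold FaF
  apply div_pos _ (by nlinarith [hx.1])
  nlinarith [hx.1, pow_pos hx.1 2, pow_pos hx.1 3]

lemma Fl_pos {x : ℝ} (hx : x ∈ Ioo (0:ℝ) 1) : 0 < FlF x := by
  have h := logL0 (x := x) ⟨hx.1.le, hx.2⟩
  have h2 := logL4 (x := x) ⟨hx.1.le, hx.2⟩
  unfold FlF
  apply div_pos _ hx.1
  nlinarith [hx.1, hx.2, pow_pos hx.1 2, pow_pos hx.1 3, pow_pos hx.1 4]

lemma Fa_mono : StrictMonoOn FaF (Ioo 0 1) := by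
  apply strictMonoOn_of_deriv_pos (convex_Ioo 0 1)
  · exact fun x hx => (hd_Fa hx).continuousAt.continuousWithinAt
  · intro x hx
    rw [interior_Ioo] at hx
    rw [(hd_Fa hx).deriv]
    have h1 : (0:ℝ) < 1 - x := by nlinarith [hx.2]
    have h := logL5 (x := x) ⟨hx.1.le, hx.2⟩
    apply div_pos _ (by nlinarith [pow_pos hx.1 2])
    have key : x^2/(2*(1-x)) ≤ x^2/(1-x) + x + Real.log (1-x) := by
      have e : x^2/(1-x) - x^2/(2*(1-x)) = x^2/(2*(1-x)) := by
        field_simp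
        ring
      nlinarith [h]
    have : 0 < x^2/(2*(1-x)) := div_pos (pow_pos hx.1 2) (by nlinarith)
    linarith

lemma Fl_mono : StrictMonoOn FlF (Ioo 0 1) := by
  apply strictMonoOn_of_deriv_pos (convex_Ioo 0 1)
  · exact fun x hx => (hd_Fl hx).continuousAt.continuousWithinAt
  · intro x hx
    rw [interior_Ioo] at hx
    rw [(hd_Fl hx).deriv]
    have h1 : (0:ℝ) < 1 - x := by nlinarith [hx.2]
    have h2 : (0:ℝ) < 1 + x := by nlinarith [hx.1]
    apply div_pos _ (pow_pos hx.1 2)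
    rw [sub_pos, lt_div_iff₀ (by positivity)]
    have hp := logL3 (x := x) ⟨hx.1.le, hx.2⟩
    have hq := logL2p (x := x) hx
    have hp2 := mul_le_mul_of_nonneg_right hp (by nlinarith : (0:ℝ) ≤ (1-x)*(1+x))
    have hq2 := mul_le_mul_of_nonneg_right hq h2.le
    nlinarith [pow_pos hx.1 3, pow_pos hx.1 2, sq_nonneg x, hx.1, hx.2,
      mul_pos (pow_pos hx.1 3) hx.1, mul_pos (mul_pos (pow_pos hx.1 3) hx.1) hx.1]

lemma G2_mono : StrictMonoOn G2F (Ioo 0 1) := by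
  apply strictMonoOn_of_deriv_pos (convex_Ioo 0 1)
  · exact fun x hx => (hd_G2 hx).continuousAt.continuousWithinAt
  · intro x hx
    rw [interior_Ioo] at hx
    rw [(hd_G2 hx).deriv]
    have h1 : (0:ℝ) < 1 - x := by nlinarith [hx.2]
    have h2 : (0:ℝ) < 1 + x := by nlinarith [hx.1]
    apply div_pos _ (pow_pos (mul_pos hx.1 h2) 2)
    set H := 2*x^2/(1-x) + (1+x)^2*Real.log (1+x) + (1+2*x)*Real.log (1-x) with hHdef
    have hp := logL4 (x := x) ⟨hx.1.le, hx.2⟩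
    have hq := logL2p (x := x) hx
    have hH1 : 0 < (1-x)*H := by
      have e1 : (1-x)*H = 2*x^2 + (1+x)^2*((1-x)*Real.log (1+x))
          + (1+2*x)*((1-x)*Real.log (1-x)) := by
        rw [hHdef]
        field_simp
      rw [e1]
      have hp2 := mul_le_mul_of_nonneg_left
        (mul_le_mul_of_nonneg_left hp h1.le) (by positivity : (0:ℝ) ≤ (1+x)^2)
      have hq2 := mul_le_mul_of_nonneg_left (neg_le.mp hq) (by nlinarith [hx.1] : (0:ℝ) ≤ 1+2*x)
      nlinarith [pow_pos hx.1 2, pow_pos hx.1 5, pow_pos hx.1 7,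
        mul_pos (pow_pos hx.1 5) h1, hx.2]
    have eH : H = ((1-x)*H)/(1-x) := by field_simp
    rw [eH]
    exact div_pos hH1 h1

lemma g_mono : StrictMonoOn gF (Ioo 0 1) := by
  apply strictMonoOn_of_deriv_pos (convex_Ioo 0 1)
  · exact fun r hr => (hd_g hr).continuousAt.continuousWithinAt
  · intro r hr
    rw [interior_Ioo] at hr
    rw [(hd_g hr).deriv]
    have h1 : (0:ℝ) < 1 - r := by nlinarith [hr.2]
    have h0 : r ≠ 0 := ne_of_gt hr.1
    have h1' : (1:ℝ) - r ≠ 0 := ne_of_gt h1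
    have hq := logL1 (x := r) ⟨hr.1.le, hr.2⟩
    have ecl : (2*r*(1-r) - r^2*(-1))/(1-r)^2 + 1
        + (((0*r - 2*1)/r^2)*Real.log (1-r) + (2/r)*(-(1-r)⁻¹))
        = (r^2*(2*r*(1-r) + r^2) + r^2*(1-r)^2 - 2*(1-r)^2*Real.log (1-r)
            - 2*r*(1-r))/(r^2*(1-r)^2) := by
      field_simp
      ring
    rw [ecl]
    apply div_pos _ (mul_pos (pow_pos hr.1 2) (pow_pos h1 2))
    have hq2 := mul_le_mul_of_nonneg_left hq (by positivity : (0:ℝ) ≤ 2*(1-r)^2)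
    nlinarith [pow_pos hr.1 3, pow_pos hr.1 5, pow_pos hr.1 4, hr.2,
      mul_pos (pow_pos hr.1 3) h1]

lemma Phi_decomp (m : ℕ) (r : ℝ) :
    PhiFun m r = FaF (r^m) * FlF (r^m) + G2F (r^m) + 2 * gF r := by
  unfold PhiFun FaF FlF G2F gF
  ring

lemma pow_mem' {m : ℕ} (hm : 0 < m) {r : ℝ} (hr : r ∈ Ioo (0:ℝ) 1) :
    r^m ∈ Ioo (0:ℝ) 1 :=
  ⟨pow_pos hr.1 m, pow_lt_one₀ hr.1.le hr.2 hm.ne'⟩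

lemma Phi_mono (m : ℕ) (hm : 0 < m) : StrictMonoOn (PhiFun m) (Ioo 0 1) := by
  intro a ha b hb hab
  have hpa := pow_mem' hm ha
  have hpb := pow_mem' hm hb
  have hplt : a^m < b^m := pow_lt_pow_left₀ hab ha.1.le hm.ne'
  rw [Phi_decomp, Phi_decomp]
  have h1 : FaF (a^m) * FlF (a^m) < FaF (b^m) * FlF (b^m) := by
    have e1 := mul_le_mul_of_nonneg_right (Fa_mono hpa hpb hplt).le (Fl_pos hpa).le
    have e2 := mul_lt_mul_of_pos_left (Fl_mono hpa hpb hplt) (Fa_pos hpb)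
    linarith
  have h2 := G2_mono hpa hpb hplt
  have h3 := g_mono ha hb hab
  linarith

lemma Phi_cont (m : ℕ) (hm : 0 < m) : ContinuousOn (PhiFun m) (Ioo 0 1) := by
  intro r hr
  have hpr := pow_mem' hm hr
  have cpow : ContinuousAt (fun y : ℝ => y^m) r := (continuous_pow m).continuousAt
  have c1 : ContinuousAt (fun y : ℝ => FaF (y^m)) r :=
    ContinuousAt.comp (x := r) (hd_Fa hpr).continuousAt cpow
  have c2 : ContinuousAt (fun y : ℝ => FlF (y^m)) r :=
    ContinuousAt.comp (x := r) (hd_Fl hpr).continuousAt cpow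
  have c3 : ContinuousAt (fun y : ℝ => G2F (y^m)) r :=
    ContinuousAt.comp (x := r) (hd_G2 hpr).continuousAt cpow
  have c4 : ContinuousAt gF r := (hd_g hr).continuousAt
  have : ContinuousAt (PhiFun m) r := by
    have e : PhiFun m = fun y => FaF (y^m) * FlF (y^m) + G2F (y^m) + 2 * gF y :=
      funext (Phi_decomp m)
    rw [e]
    exact ((c1.mul c2).add c3).add (c4.const_mul 2)
  exact this.continuousWithinAt

lemma psi_nonneg {x : ℝ} (hx : x ∈ Ioo (0:ℝ) 1) :
    0 ≤ (1-x^2)/4 * (FlF x + 2/(1+x)) - Real.log (1+x)/x + 2 * gF x := by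
  have h0 : x ≠ 0 := ne_of_gt hx.1
  have h1 : (0:ℝ) < 1 - x := by nlinarith [hx.2]
  have h2 : (0:ℝ) < 1 + x := by nlinarith [hx.1]
  have h1' : (1:ℝ) - x ≠ 0 := ne_of_gt h1
  have h2' : (1:ℝ) + x ≠ 0 := ne_of_gt h2
  set a := Real.log (1-x) with ha
  set b := Real.log (1+x) with hb
  have e : 4*x*(1-x)*((1-x^2)/4 * (FlF x + 2/(1+x)) - b/x + 2 * gF x)
      = -((1-x)*(3+x^2)*b) + (15+x^2)*((1-x)*a)
        + (2*x*(1-x)^2 + 8*x^3 + 8*x^2*(1-x) + 16*x*(1-x)) := by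
    unfold FlF gF
    rw [← ha, ← hb]
    field_simp
    ring
  have hbu := logL3 (x := x) ⟨hx.1.le, hx.2⟩
  have hqa := logL2p (x := x) hx
  have key : 0 ≤ -((1-x)*(3+x^2)*b) + (15+x^2)*((1-x)*a)
        + (2*x*(1-x)^2 + 8*x^3 + 8*x^2*(1-x) + 16*x*(1-x)) := by
    have e1 := mul_le_mul_of_nonneg_left hbu
      (by nlinarith [hx.1, sq_nonneg x] : (0:ℝ) ≤ (1-x)*(3+x^2))
    have e2 := mul_le_mul_of_nonneg_left (neg_le.mp hqa)
      (by nlinarith [sq_nonneg x] : (0:ℝ) ≤ 15+x^2)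
    nlinarith [pow_pos hx.1 4, pow_pos hx.1 5, pow_pos hx.1 6, hx.2,
      mul_pos (pow_pos hx.1 4) h1]
  have hpos : (0:ℝ) < 4*x*(1-x) := by nlinarith [hx.1]
  have h4 : 0 ≤ 4*x*(1-x)*((1-x^2)/4 * (FlF x + 2/(1+x)) - b/x + 2 * gF x) := by
    rw [e]; exact key
  exact le_of_mul_le_mul_left (by simpa using h4) hpos

lemma Phi_Rm_nonneg (m : ℕ) (hm : 0 < m) {Rm : ℝ} (hRm : Rm ∈ Ioo (0:ℝ) 1)
    (hroot : 2 * (-Rm ^ m - Real.log (1 - Rm ^ m)) = Rm ^ m * (1 - Rm ^ (2 * m))) :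
    0 ≤ PhiFun m Rm := by
  set x := Rm^m with hxdef
  have hxm : x ∈ Ioo (0:ℝ) 1 := pow_mem' hm hRm
  have hsq : Rm^(2*m) = x^2 := by rw [two_mul, pow_add]; ring
  rw [hsq] at hroot
  have hA : FaF x = (1-x^2)/4 := by
    unfold FaF
    rw [div_eq_div_iff (by nlinarith [hxm.1] : (2:ℝ)*x ≠ 0) (by norm_num : (4:ℝ) ≠ 0)]
    nlinarith [hroot]
  have hle : x ≤ Rm := by
    calc x = Rm^m := rfl
    _ ≤ Rm^1 := pow_le_pow_of_le_one hRm.1.le hRm.2.le hm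
    _ = Rm := pow_one Rm
  have hg : gF x ≤ gF Rm := by
    rcases eq_or_lt_of_le hle with h|h
    · exact le_of_eq (congrArg gF h)
    · exact (g_mono hxm hRm h).le
  have hpsi := psi_nonneg hxm
  rw [Phi_decomp]
  have eg : G2F x = FaF x * (2/(1+x)) - Real.log (1+x)/x := rfl
  rw [eg, hA]
  nlinarith [hpsi, hg]

lemma tendsto_pow_zero (m : ℕ) (hm : 0 < m) :
    Tendsto (fun r : ℝ => r^m) (nhdsWithin 0 (Ioi 0)) (nhds 0) := by
  have := Filter.Tendsto.mono_left ((continuous_pow m).tendsto (0:ℝ))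
    (nhdsWithin_le_nhds (s := Ioi (0:ℝ)))
  simpa [zero_pow hm.ne'] using this

lemma ev_Ioo0 : ∀ᶠ r in nhdsWithin (0:ℝ) (Ioi 0), r ∈ Ioo (0:ℝ) 1 :=
  Ioo_mem_nhdsGT_of_mem ⟨le_refl 0, zero_lt_one⟩

lemma Fa_upper {x : ℝ} (hx : x ∈ Ioo (0:ℝ) 1) : FaF x ≤ x/(4*(1-x)) := by
  have h1 : (0:ℝ) < 1 - x := by nlinarith [hx.2]
  have h := logL5 (x := x) ⟨hx.1.le, hx.2⟩
  unfold FaF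
  rw [div_le_iff₀ (by nlinarith [hx.1] : (0:ℝ) < 2*x)]
  have e : x/(4*(1-x))*(2*x) = x^2/(2*(1-x)) := by field_simp; ring
  rw [e]
  have e2 : x^2/(2*(1-x)) = (x + x^2/(2*(1-x))) - x := by ring
  linarith [h]

lemma tendsto_Fa0 (m : ℕ) (hm : 0 < m) :
    Tendsto (fun r : ℝ => FaF (r^m)) (nhdsWithin 0 (Ioi 0)) (nhds 0) := by
  apply tendsto_of_tendsto_of_tendsto_of_le_of_le' (g := fun _ : ℝ => (0:ℝ))
    (h := fun r : ℝ => r^m/(4*(1-r^m)))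
  · exact tendsto_const_nhds
  · have hc : ContinuousAt (fun r : ℝ => r^m/(4*(1-r^m))) 0 := by
      apply ContinuousAt.div (continuous_pow m).continuousAt (by fun_prop)
      simp [zero_pow hm.ne']
    have := hc.tendsto.mono_left (nhdsWithin_le_nhds (s := Ioi (0:ℝ)))
    simpa [zero_pow hm.ne'] using this
  · filter_upwards [ev_Ioo0] with r hr
    exact (Fa_pos (pow_mem' hm hr)).le
  · filter_upwards [ev_Ioo0] with r hr
    exact Fa_upper (pow_mem' hm hr)

lemma Fl_bounds {x : ℝ} (hx : x ∈ Ioo (0:ℝ) 1) :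
    2 - x/2 ≤ FlF x ∧ FlF x ≤ 2 + x/(2*(1-x)) := by
  have h1 : (0:ℝ) < 1 - x := by nlinarith [hx.2]
  have hbl := logL4 (x := x) ⟨hx.1.le, hx.2⟩
  have hbu := logL0p hx.1.le
  have hal := logL5 (x := x) ⟨hx.1.le, hx.2⟩
  have hau := logL0 (x := x) ⟨hx.1.le, hx.2⟩
  unfold FlF
  constructor
  · rw [le_div_iff₀ hx.1]
    nlinarith [pow_pos hx.1 3, pow_pos hx.1 4, hx.2, pow_pos hx.1 2]
  · rw [div_le_iff₀ hx.1]
    have e : (2 + x/(2*(1-x)))*x = 2*x + x^2/(2*(1-x)) := by field_simp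
    rw [e]
    have e2 : x^2/(2*(1-x)) = (x + x^2/(2*(1-x))) - x := by ring
    linarith

lemma tendsto_Fl0 (m : ℕ) (hm : 0 < m) :
    Tendsto (fun r : ℝ => FlF (r^m)) (nhdsWithin 0 (Ioi 0)) (nhds 2) := by
  apply tendsto_of_tendsto_of_tendsto_of_le_of_le' (g := fun r : ℝ => 2 - r^m/2)
    (h := fun r : ℝ => 2 + r^m/(2*(1-r^m)))
  · have hc : ContinuousAt (fun r : ℝ => 2 - r^m/2) 0 := by fun_prop
    have := hc.tendsto.mono_left (nhdsWithin_le_nhds (s := Ioi (0:ℝ)))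
    simpa [zero_pow hm.ne'] using this
  · have hc : ContinuousAt (fun r : ℝ => 2 + r^m/(2*(1-r^m))) 0 := by
      apply ContinuousAt.add continuousAt_const
      apply ContinuousAt.div (continuous_pow m).continuousAt (by fun_prop)
      simp [zero_pow hm.ne']
    have := hc.tendsto.mono_left (nhdsWithin_le_nhds (s := Ioi (0:ℝ)))
    simpa [zero_pow hm.ne'] using this
  · filter_upwards [ev_Ioo0] with r hr
    exact (Fl_bounds (pow_mem' hm hr)).1
  · filter_upwards [ev_Ioo0] with r hr
    exact (Fl_bounds (pow_mem' hm hr)).2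

lemma C_bounds {x : ℝ} (hx : x ∈ Ioo (0:ℝ) 1) :
    1 - x/2 ≤ Real.log (1+x)/x ∧ Real.log (1+x)/x ≤ 1 := by
  have hbl := logL4 (x := x) ⟨hx.1.le, hx.2⟩
  have hbu := logL0p hx.1.le
  constructor
  · rw [le_div_iff₀ hx.1]
    nlinarith [pow_pos hx.1 3, pow_pos hx.1 4, hx.2]
  · rw [div_le_one hx.1]
    linarith

lemma tendsto_C0 (m : ℕ) (hm : 0 < m) :
    Tendsto (fun r : ℝ => Real.log (1+r^m)/r^m) (nhdsWithin 0 (Ioi 0)) (nhds 1) := by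
  apply tendsto_of_tendsto_of_tendsto_of_le_of_le' (g := fun r : ℝ => 1 - r^m/2)
    (h := fun _ : ℝ => (1:ℝ))
  · have hc : ContinuousAt (fun r : ℝ => 1 - r^m/2) 0 := by fun_prop
    have := hc.tendsto.mono_left (nhdsWithin_le_nhds (s := Ioi (0:ℝ)))
    simpa [zero_pow hm.ne'] using this
  · exact tendsto_const_nhds
  · filter_upwards [ev_Ioo0] with r hr
    exact (C_bounds (pow_mem' hm hr)).1
  · filter_upwards [ev_Ioo0] with r hr
    exact (C_bounds (pow_mem' hm hr)).2

lemma tendsto_G20 (m : ℕ) (hm : 0 < m) :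
    Tendsto (fun r : ℝ => G2F (r^m)) (nhdsWithin 0 (Ioi 0)) (nhds (-1)) := by
  have h2 : Tendsto (fun r : ℝ => 2/(1+r^m)) (nhdsWithin 0 (Ioi 0)) (nhds 2) := by
    have hc : ContinuousAt (fun r : ℝ => 2/(1+r^m)) 0 := by
      apply ContinuousAt.div continuousAt_const (by fun_prop)
      simp [zero_pow hm.ne']
    have := hc.tendsto.mono_left (nhdsWithin_le_nhds (s := Ioi (0:ℝ)))
    simpa [zero_pow hm.ne'] using this
  have := ((tendsto_Fa0 m hm).mul h2).sub (tendsto_C0 m hm)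
  have e : (fun r : ℝ => G2F (r^m))
      = fun r : ℝ => FaF (r^m) * (2/(1+r^m)) - Real.log (1+r^m)/r^m := rfl
  rw [e]
  simpa using this

lemma tendsto_g0 : Tendsto gF (nhdsWithin 0 (Ioi 0)) (nhds 0) := by
  have h1 : Tendsto (fun r : ℝ => r^2/(1-r) + r + 2) (nhdsWithin 0 (Ioi 0)) (nhds 2) := by
    have hc : ContinuousAt (fun r : ℝ => r^2/(1-r) + r + 2) 0 := by
      apply ContinuousAt.add (ContinuousAt.add _ continuousAt_id) continuousAt_const
      apply ContinuousAt.div (by fun_prop) (by fun_prop)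
      norm_num
    have := hc.tendsto.mono_left (nhdsWithin_le_nhds (s := Ioi (0:ℝ)))
    simpa using this
  have h2 : Tendsto (fun r : ℝ => (2/r)*Real.log (1-r)) (nhdsWithin 0 (Ioi 0)) (nhds (-2)) := by
    apply tendsto_of_tendsto_of_tendsto_of_le_of_le' (g := fun r : ℝ => -2 - r/(1-r))
      (h := fun _ : ℝ => (-2:ℝ))
    · have hc : ContinuousAt (fun r : ℝ => -2 - r/(1-r)) 0 := by
        apply ContinuousAt.sub continuousAt_const
        apply ContinuousAt.div continuousAt_id (by fun_prop)
        norm_num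
      have := hc.tendsto.mono_left (nhdsWithin_le_nhds (s := Ioi (0:ℝ)))
      simpa using this
    · exact tendsto_const_nhds
    · filter_upwards [ev_Ioo0] with r hr
      have h1' : (0:ℝ) < 1 - r := by nlinarith [hr.2]
      have hr0 : r ≠ 0 := ne_of_gt hr.1
      have h1'' : (1:ℝ) - r ≠ 0 := ne_of_gt h1'
      have h := logL5 (x := r) ⟨hr.1.le, hr.2⟩
      have e : (-2 - r/(1-r)) = (2/r) * (-(r + r^2/(2*(1-r)))) - r/(1-r) + (2/r)*(r^2/(2*(1-r))) := by
        field_simp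
        ring
      rw [e]
      have : (2/r)*(-(r + r^2/(2*(1-r)))) ≤ (2/r)*Real.log (1-r) :=
        mul_le_mul_of_nonneg_left h (div_nonneg (by norm_num) hr.1.le)
      have e2 : (2/r)*(r^2/(2*(1-r))) = r/(1-r) := by field_simp
      linarith
    · filter_upwards [ev_Ioo0] with r hr
      have hr0 : r ≠ 0 := ne_of_gt hr.1
      have h := logL0 (x := r) ⟨hr.1.le, hr.2⟩
      have : (2/r)*Real.log (1-r) ≤ (2/r)*(-r) :=
        mul_le_mul_of_nonneg_left h (div_nonneg (by norm_num) hr.1.le)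
      have e : (2/r)*(-r) = -2 := by field_simp
      linarith [e ▸ this]
  have := h1.add h2
  have e : gF = fun r : ℝ => (r^2/(1-r) + r + 2) + (2/r)*Real.log (1-r) := rfl
  rw [e]
  simpa using this

lemma tendsto_Phi0 (m : ℕ) (hm : 0 < m) :
    Tendsto (PhiFun m) (nhdsWithin 0 (Ioi 0)) (nhds (-1)) := by
  have e : PhiFun m = fun r => FaF (r^m) * FlF (r^m) + G2F (r^m) + 2 * gF r :=
    funext (Phi_decomp m)
  rw [e]
  have := (((tendsto_Fa0 m hm).mul (tendsto_Fl0 m hm)).add (tendsto_G20 m hm)).add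
    (tendsto_g0.const_mul 2)
  simpa using this

lemma Phi_lower {m : ℕ} (hm : 0 < m) {r : ℝ} (hr : r ∈ Ioo (0:ℝ) 1) (hr2 : 1/2 < r) :
    3/4 * (-Real.log (1 - r^m)) - 3/4 - 1 + 2 * gF (1/2) ≤ PhiFun m r := by
  have hx := pow_mem' hm hr
  set x := r^m with hxdef
  set u := -Real.log (1-x) with hu
  have hupos : 0 ≤ u := by
    have := logL0 (x := x) ⟨hx.1.le, hx.2⟩
    simp only [hu]
    linarith [hx.1]
  have hFl32 : (3/2 : ℝ) ≤ FlF x := by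
    have := (Fl_bounds hx).1
    linarith [hx.2]
  have hprod : 3/4 * (u - 1) ≤ FaF x * FlF x := by
    rcases le_or_gt u 1 with h|h
    · have : (0:ℝ) ≤ FaF x * FlF x := mul_nonneg (Fa_pos hx).le (Fl_pos hx).le
      nlinarith
    · have hFa : (u-1)/2 ≤ FaF x := by
        unfold FaF
        rw [le_div_iff₀ (by nlinarith [hx.1] : (0:ℝ) < 2*x)]
        have : -x - Real.log (1-x) = u - x := by rw [hu]; ring
        rw [this]
        nlinarith [hx.1, hx.2, hupos]
      calc 3/4 * (u-1) = (u-1)/2 * (3/2) := by ring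
      _ ≤ FaF x * (3/2) := by
          apply mul_le_mul_of_nonneg_right hFa (by norm_num)
      _ ≤ FaF x * FlF x := by
          apply mul_le_mul_of_nonneg_left hFl32 (Fa_pos hx).le
  have hG2 : (-1:ℝ) ≤ G2F x := by
    have eg : G2F x = FaF x * (2/(1+x)) - Real.log (1+x)/x := rfl
    rw [eg]
    have h1 : Real.log (1+x)/x ≤ 1 := (C_bounds hx).2
    have h2 : 0 ≤ FaF x * (2/(1+x)) :=
      mul_nonneg (Fa_pos hx).le (div_nonneg (by norm_num) (by nlinarith [hx.1]))
    linarith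
  have hgm : gF (1/2) ≤ gF r := by
    rcases eq_or_lt_of_le hr2.le with h|h
    · exact le_of_eq (congrArg gF h)
    · exact (g_mono (by norm_num) hr h).le
  have := Phi_decomp m r
  rw [this]
  have : 3/4*(u-1) = 3/4*u - 3/4 := by ring
  nlinarith [hprod, hG2, hgm]

lemma tendsto_Phi1 (m : ℕ) (hm : 0 < m) :
    Tendsto (PhiFun m) (nhdsWithin 1 (Iio 1)) atTop := by
  have ev1 : ∀ᶠ r in nhdsWithin (1:ℝ) (Iio 1), r ∈ Ioo (1/2 : ℝ) 1 :=
    Ioo_mem_nhdsLT_of_mem ⟨by norm_num, le_refl 1⟩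
  have hpow1 : Tendsto (fun r : ℝ => 1 - r^m) (nhdsWithin 1 (Iio 1)) (nhdsWithin 0 (Ioi 0)) := by
    rw [tendsto_nhdsWithin_iff]
    constructor
    · have := Filter.Tendsto.mono_left ((continuous_pow m).tendsto (1:ℝ))
        (nhdsWithin_le_nhds (s := Iio (1:ℝ)))
      have h2 := (tendsto_const_nhds (x := (1:ℝ))).sub this
      simpa using h2
    · filter_upwards [ev1] with r hr
      have : r^m < 1 := pow_lt_one₀ (by linarith [hr.1] : (0:ℝ) ≤ r) hr.2 hm.ne'
      simpa using this
  have hu : Tendsto (fun r : ℝ => -Real.log (1 - r^m)) (nhdsWithin 1 (Iio 1)) atTop := by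
    have := Real.tendsto_log_nhdsGT_zero.comp hpow1
    exact tendsto_neg_atBot_atTop.comp this
  have hlin : Tendsto (fun r : ℝ => 3/4 * (-Real.log (1 - r^m)) - 3/4 - 1 + 2 * gF (1/2))
      (nhdsWithin 1 (Iio 1)) atTop := by
    apply tendsto_atTop_add_const_right
    apply tendsto_atTop_add_const_right
    apply tendsto_atTop_add_const_right
    exact hu.const_mul_atTop (by norm_num)
  apply tendsto_atTop_mono' _ _ hlin
  filter_upwards [ev1] with r hr
  exact Phi_lower hm ⟨by linarith [hr.1], hr.2⟩ hr.1

theorem stmt19 (m : ℕ) (hm : 0 < m) (Rm : ℝ) (hRm : Rm ∈ Ioo (0:ℝ) 1)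
    (hRmroot : 2 * (-Rm ^ m - Real.log (1 - Rm ^ m)) = Rm ^ m * (1 - Rm ^ (2 * m))) :
    MonotoneOn (PhiFun m) (Ioo (0:ℝ) 1) ∧
    Tendsto (PhiFun m) (nhdsWithin 0 (Ioi 0)) (nhds (-1)) ∧
    Tendsto (PhiFun m) (nhdsWithin 1 (Iio 1)) atTop ∧
    (∃! r₁, r₁ ∈ Ioo (0:ℝ) 1 ∧ PhiFun m r₁ = 0) ∧
    (∀ r ∈ Ioo (0:ℝ) 1, Rm < r → 0 < PhiFun m r) ∧
    (∀ r₁ ∈ Ioo (0:ℝ) 1, PhiFun m r₁ = 0 → r₁ ≤ Rm) := by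
  have hpos5 : ∀ r ∈ Ioo (0:ℝ) 1, Rm < r → 0 < PhiFun m r := by
    intro r hr hlt
    exact lt_of_le_of_lt (Phi_Rm_nonneg m hm hRm hRmroot) (Phi_mono m hm hRm hr hlt)
  refine ⟨(Phi_mono m hm).monotoneOn, tendsto_Phi0 m hm, tendsto_Phi1 m hm, ?_, hpos5, ?_⟩
  · -- existence and uniqueness of root
    obtain ⟨a, hna, hamem⟩ :=
      (((tendsto_Phi0 m hm).eventually (eventually_lt_nhds
        (by norm_num : (-1:ℝ) < 0))).and ev_Ioo0).exists
    have hev1 : ∀ᶠ r in nhdsWithin (1:ℝ) (Iio 1), r ∈ Ioo a 1 :=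
      Ioo_mem_nhdsLT_of_mem ⟨hamem.2, le_refl 1⟩
    obtain ⟨b, hpb, hbmem⟩ :=
      (((tendsto_Phi1 m hm).eventually_gt_atTop 0).and hev1).exists
    have hab : a < b := hbmem.1
    have hbIoo : b ∈ Ioo (0:ℝ) 1 := ⟨lt_trans hamem.1 hab, hbmem.2⟩
    have hsub : Icc a b ⊆ Ioo (0:ℝ) 1 := fun t ht =>
      ⟨lt_of_lt_of_le hamem.1 ht.1, lt_of_le_of_lt ht.2 hbIoo.2⟩
    have hIVT := intermediate_value_Ioo hab.le ((Phi_cont m hm).mono hsub)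
    obtain ⟨r₁, hr₁ab, hr₁0⟩ := hIVT ⟨hna, hpb⟩
    have hr₁Ioo : r₁ ∈ Ioo (0:ℝ) 1 :=
      ⟨lt_trans hamem.1 hr₁ab.1, lt_trans hr₁ab.2 hbIoo.2⟩
    refine ⟨r₁, ⟨hr₁Ioo, hr₁0⟩, ?_⟩
    intro y hy
    exact (Phi_mono m hm).injOn hy.1 hr₁Ioo (by rw [hy.2, hr₁0])
  · intro r₁ hr₁ h0
    by_contra hc
    push_neg at hc
    have := hpos5 r₁ hr₁ hc
    rw [h0] at this
    exact lt_irrefl 0 this
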